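/- Let p be a prime, let α = (α₁, …, α_r) be a basis for a finite abelian p-group G with ord(α_i) = p^{n_i} and exponent p^m = p^{max n_i}, and let k be an integer with 0 < k ≤ m. Let β ∈ G and let x = DL(α, β). Set γ_i = α_i^{p^k}; then β^{p^k} ∈ ⟨γ₁, …, γ_r⟩, and letting u = DL(γ, β^{p^k}), the element β · α^{−u} satisfies (β · α^{−u})^{p^k} = 1. Further set q_i = p^{max(0, n_i − k)} and δ_i = α_i^{q_i}; then β · α^{−u} ∈ ⟨δ₁, …, δ_r⟩, and letting v = DL(δ, β · α^{−u}), one has x_i = q_i · v_i + u_i for every i (as an identity of integers). -/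

import Mathlib

/-!
Multiplying by `p ^ k` kills the digits of `DL(α, β)` above the place value `q i = p ^ (n i - k)`
(the order of `α i ^ p ^ k`), so independence of the basis forces `u i = x i % q i`. Hence
`β ⬝ α^{-u} = ∏ (α i ^ q i) ^ (x i / q i)`, and independence once more gives `v i = x i / q i`;
the identity is then division with remainder.
-/

def IsBasis {G : Type*} [CommGroup G] {ι : Type*} [Fintype ι]
    (α : ι → G) (H : Subgroup G) : Prop :=
  Subgroup.closure (Set.range α) = H ∧
    ∀ β ∈ H, ∃! x : ι → ℕ,
      (∀ i, x i < orderOf (α i)) ∧ ∏ i, α i ^ x i = β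

theorem orderOf_pow_pow_of_orderOf_eq_pow {G : Type*} [Monoid G] {p : ℕ} (hp : 0 < p) {a : G} {n : ℕ}
    (ha : orderOf a = p ^ n) (k : ℕ) : orderOf (a ^ p ^ k) = p ^ (n - k) := by
  rcases le_total k n with hkn | hnk
  · rw [orderOf_pow_of_dvd (pow_ne_zero _ hp.ne') (ha ▸ pow_dvd_pow p hkn), ha,
      Nat.pow_div hkn hp]
  · rw [orderOf_dvd_iff_pow_eq_one.mp (ha ▸ pow_dvd_pow p hnk), orderOf_one,
      Nat.sub_eq_zero_of_le hnk, pow_zero]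

theorem eq_mod_orderOf_of_pow_eq_pow {G : Type*} [LeftCancelMonoid G] {a : G} {u w : ℕ}
    (h : a ^ u = a ^ w) (hu : u < orderOf a) : u = w % orderOf a :=
  (Nat.mod_eq_of_lt hu).symm.trans (pow_eq_pow_iff_modEq.mp h)

section CommGroup

variable {G : Type*} [CommGroup G] {ι : Type*} [Fintype ι]

theorem prod_pow_pow_comm (a : ι → G) (y : ι → ℕ) (d : ℕ) :
    (∏ i, a i ^ y i) ^ d = ∏ i, (a i ^ d) ^ y i := by
  simp_rw [← Finset.prod_pow, pow_right_comm]

theorem prod_pow_mem_closure_range (a : ι → G) (y : ι → ℕ) :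
    ∏ i, a i ^ y i ∈ Subgroup.closure (Set.range a) :=
  Subgroup.prod_mem _ fun i _ => pow_mem (Subgroup.subset_closure (Set.mem_range_self i)) _

theorem prod_pow_mul_inv_prod_pow_mod (a : ι → G) (x e : ι → ℕ) :
    (∏ i, a i ^ x i) * (∏ i, a i ^ (x i % e i))⁻¹ = ∏ i, (a i ^ e i) ^ (x i / e i) := by
  rw [mul_inv_eq_iff_eq_mul, ← Finset.prod_mul_distrib]
  simp_rw [← pow_mul, ← pow_add, Nat.div_add_mod]

namespace IsBasis

variable {α : ι → G} {H : Subgroup G}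

theorem orderOf_pos (hα : IsBasis α H) (i : ι) : 0 < orderOf (α i) := by
  obtain ⟨x, ⟨hx, -⟩, -⟩ := hα.2 1 H.one_mem
  exact (Nat.zero_le _).trans_lt (hx i)

theorem pow_eq_pow_of_prod_eq (hα : IsBasis α H) {y z : ι → ℕ}
    (h : ∏ i, α i ^ y i = ∏ i, α i ^ z i) (i : ι) : α i ^ y i = α i ^ z i := by
  have hmem : ∏ i, α i ^ y i ∈ H := hα.1 ▸ prod_pow_mem_closure_range α y
  obtain ⟨w, -, hw⟩ := hα.2 _ hmem
  have hred : ∀ t : ι → ℕ, ∏ i, α i ^ (t i % orderOf (α i)) = ∏ i, α i ^ t i := fun t => by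
    simp_rw [pow_mod_orderOf]
  have hy := hw _ ⟨fun i => Nat.mod_lt _ (hα.orderOf_pos i), hred y⟩
  have hz := hw _ ⟨fun i => Nat.mod_lt _ (hα.orderOf_pos i), (hred z).trans h.symm⟩
  rw [← pow_mod_orderOf, congrFun (hy.trans hz.symm) i, pow_mod_orderOf]

theorem pow_pow_eq_pow_pow_of_prod_eq (hα : IsBasis α H) (d : ι → ℕ) {y z : ι → ℕ}
    (h : ∏ i, (α i ^ d i) ^ y i = ∏ i, (α i ^ d i) ^ z i) (i : ι) :
    (α i ^ d i) ^ y i = (α i ^ d i) ^ z i := by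
  simp_rw [← pow_mul] at h ⊢
  exact hα.pow_eq_pow_of_prod_eq h i

end IsBasis

end CommGroup

theorem dl_splitting_general {p : ℕ} (hp : p.Prime) {G : Type*} [CommGroup G]
    {r : ℕ} (α : Fin r → G) (n : Fin r → ℕ)
    (hord : ∀ i, orderOf (α i) = p ^ n i)
    (hα : IsBasis α (⊤ : Subgroup G))
    (k : ℕ)
    (β : G) (x : Fin r → ℕ)
    (hxlt : ∀ i, x i < orderOf (α i)) (hx : ∏ i, α i ^ x i = β) :
    β ^ p ^ k ∈ Subgroup.closure (Set.range fun i => α i ^ p ^ k) ∧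
      ∀ u : Fin r → ℕ,
        (∀ i, u i < orderOf (α i ^ p ^ k)) →
        ∏ i, (α i ^ p ^ k) ^ u i = β ^ p ^ k →
        (β * (∏ i, α i ^ u i)⁻¹) ^ p ^ k = 1 ∧
          β * (∏ i, α i ^ u i)⁻¹ ∈
            Subgroup.closure (Set.range fun i => α i ^ p ^ (n i - k)) ∧
          ∀ v : Fin r → ℕ,
            (∀ i, v i < orderOf (α i ^ p ^ (n i - k))) →
            ∏ i, (α i ^ p ^ (n i - k)) ^ v i = β * (∏ i, α i ^ u i)⁻¹ →
            ∀ i, x i = p ^ (n i - k) * v i + u i := by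
  have hq : ∀ i, orderOf (α i ^ p ^ k) = p ^ (n i - k) := fun i =>
    orderOf_pow_pow_of_orderOf_eq_pow hp.pos (hord i) k
  have hβ : β ^ p ^ k = ∏ i, (α i ^ p ^ k) ^ x i := hx ▸ prod_pow_pow_comm α x _
  refine ⟨hβ ▸ prod_pow_mem_closure_range _ x, fun u hu hu_prod => ?_⟩
  have hu_eq : ∀ i, u i = x i % p ^ (n i - k) := fun i => hq i ▸
    eq_mod_orderOf_of_pow_eq_pow
      (hα.pow_pow_eq_pow_pow_of_prod_eq (fun _ => p ^ k) (hu_prod.trans hβ) i) (hu i)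
  have hrest : β * (∏ i, α i ^ u i)⁻¹ =
      ∏ i, (α i ^ p ^ (n i - k)) ^ (x i / p ^ (n i - k)) := by
    simp_rw [hu_eq, ← hx]
    exact prod_pow_mul_inv_prod_pow_mod α x _
  refine ⟨?_, hrest ▸ prod_pow_mem_closure_range _ _, fun v hv hv_prod i => ?_⟩
  · rw [mul_pow, inv_pow, prod_pow_pow_comm, hu_prod, mul_inv_cancel]
  · have hq_dvd : p ^ (n i - k) ∣ orderOf (α i) := hord i ▸ pow_dvd_pow p (Nat.sub_le _ _)
    have hdiv_lt : x i / p ^ (n i - k) < orderOf (α i ^ p ^ (n i - k)) := by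
      rw [orderOf_pow_of_dvd (pow_ne_zero _ hp.ne_zero) hq_dvd]
      exact Nat.div_lt_div_of_lt_of_dvd hq_dvd (hxlt i)
    have hv_eq : v i = x i / p ^ (n i - k) := by
      rw [eq_mod_orderOf_of_pow_eq_pow (hα.pow_pow_eq_pow_pow_of_prod_eq _
        (hv_prod.trans hrest) i) (hv i), Nat.mod_eq_of_lt hdiv_lt]
    rw [hu_eq, hv_eq, Nat.div_add_mod]

/-- the splitting of Section 2: let `α` be a basis for the
finite abelian `p`-group `G` with `orderOf (α i) = p ^ n i` and exponent
`p ^ m = p ^ max n i`, let `0 < k ≤ m`, let `β ∈ G` and `x = DL(α, β)`.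
With `γ i = α i ^ p ^ k`, we have `β ^ p ^ k ∈ ⟨γ⟩`; and for
`u = DL(γ, β ^ p ^ k)`, the element `β ⬝ α^{-u}` satisfies
`(β ⬝ α^{-u}) ^ p ^ k = 1`.  With `q i = p ^ max 0 (n i - k)` and
`δ i = α i ^ q i`, we have `β ⬝ α^{-u} ∈ ⟨δ⟩`, and for
`v = DL(δ, β ⬝ α^{-u})` one has `x i = q i * v i + u i` for every `i`. -/
theorem dl_splitting {p : ℕ} (hp : p.Prime) {G : Type*} [CommGroup G]
    [Fintype G] (hG : IsPGroup p G) {r : ℕ} (α : Fin r → G) (n : Fin r → ℕ)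
    (hord : ∀ i, orderOf (α i) = p ^ n i)
    (hα : IsBasis α (⊤ : Subgroup G))
    (m : ℕ) (hm : IsGreatest (Set.range n) m)
    (hexp : Monoid.exponent G = p ^ m)
    (k : ℕ) (hk0 : 0 < k) (hkm : k ≤ m)
    (β : G) (x : Fin r → ℕ)
    (hxlt : ∀ i, x i < orderOf (α i)) (hx : ∏ i, α i ^ x i = β) :
    β ^ p ^ k ∈ Subgroup.closure (Set.range fun i => α i ^ p ^ k) ∧
      ∀ u : Fin r → ℕ,
        (∀ i, u i < orderOf (α i ^ p ^ k)) →
        ∏ i, (α i ^ p ^ k) ^ u i = β ^ p ^ k →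
        (β * (∏ i, α i ^ u i)⁻¹) ^ p ^ k = 1 ∧
          β * (∏ i, α i ^ u i)⁻¹ ∈
            Subgroup.closure (Set.range fun i => α i ^ p ^ (n i - k)) ∧
          ∀ v : Fin r → ℕ,
            (∀ i, v i < orderOf (α i ^ p ^ (n i - k))) →
            ∏ i, (α i ^ p ^ (n i - k)) ^ v i = β * (∏ i, α i ^ u i)⁻¹ →
            ∀ i, x i = p ^ (n i - k) * v i + u i :=
  dl_splitting_general hp α n hord hα k β x hxlt hx
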